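/- Let q be a prime power, let ℓ_1 and ℓ_2 be two affine lines in F_q^2 with distinct directions (non-parallel), and let E = { (x, y, 0) ∈ H_1(F_q) : (x, y) ∈ ℓ_1 ∪ ℓ_2 }. Then |E| = 2q − 1, and for every refined direction ω ∈ D_1 one has M^rd 1_E(ω) ≥ 1. Consequently, for every real 1 ≤ v < ∞, ‖M^rd 1_E‖_{ℓ^v(D_1)} ≥ (q^2 + q)^{1/v}. -/

import Mathlib

/-!
`K` plays the role of the finite field `F_q` with `q = Fintype.card K` elements
(the cardinality of a finite field is automatically a prime power).
The Heisenberg group `H₁(F_q)` is identified with `K × K × K`.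
The set `D₁` of non-vertical (refined) projective directions
`{[a : b : c] ∈ P²(F_q) : (a,b) ≠ (0,0)}` is identified with `Option K × K`:
`(some m, γ)` corresponds to `[1 : m : γ]` and `(none, γ)` to `[0 : 1 : γ]`
(every element of `D₁` has a unique such normal form).
-/

noncomputable section

open Finset

/-- The point with parameter `s` of the horizontal line with refined direction
`ω ∈ D₁` indexed by `τ ∈ F_q`.  For `ω = [1 : m : γ]` the `q` horizontal lines
with `Dir L = ω` are `{(x, m x - γ, τ + γ x) : x ∈ F_q}`, `τ ∈ F_q`; for
`ω = [0 : 1 : γ]` they are `{(γ, y, τ + γ y) : y ∈ F_q}`, `τ ∈ F_q`. -/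
def lineRd {K : Type*} [Field K] (ω : Option K × K) (τ : K) (s : K) : K × K × K :=
  match ω.1 with
  | some m => (s, m * s - ω.2, τ + ω.2 * s)
  | none => (ω.2, s, τ + ω.2 * s)

/-- The refined-direction maximal function `M^rd F` on `D₁ ≃ Option K × K`:
the maximum, over the `q` horizontal lines `L` with `Dir L = ω`, of the sum of
`|F|` along `L`. -/
def Mrd {K : Type*} [Field K] [Fintype K] (Fc : K × K × K → ℂ) (ω : Option K × K) : ℝ :=
  Finset.univ.sup' ⟨(0 : K), Finset.mem_univ _⟩
    fun τ => ∑ s : K, ‖Fc (lineRd ω τ s)‖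

/-- `ℓ^r` norm of a complex-valued function on a finite set. -/
def lpNormC {X : Type*} [Fintype X] (r : ℝ) (g : X → ℂ) : ℝ :=
  (∑ x, ‖g x‖ ^ r) ^ (1 / r)

/-- `ℓ^r` norm of a real-valued function on a finite set. -/
def lpNormR {X : Type*} [Fintype X] (r : ℝ) (g : X → ℝ) : ℝ :=
  (∑ x, |g x| ^ r) ^ (1 / r)

/-- The lift to the plane `t = 0` in `H₁(F_q)` of the union of the two affine
lines `{wᵢ + s vᵢ : s ∈ F_q} ⊆ F_q²`, `i = 1, 2`. -/
def twoLinesE {K : Type*} [Field K] (w₁ v₁ w₂ v₂ : K × K) : Set (K × K × K) :=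
  { z | z.2.2 = 0 ∧
    ((∃ s : K, (z.1, z.2.1) = (w₁.1 + s * v₁.1, w₁.2 + s * v₁.2)) ∨
     (∃ s : K, (z.1, z.2.1) = (w₂.1 + s * v₂.1, w₂.2 + s * v₂.2))) }

/-!
The shadow of every horizontal line on the plane `t = 0` is an affine line of `F_q²`, and the
`q` horizontal lines with a given refined direction all have the same shadow, differing only in
their height. Two non-parallel lines of `F_q²` meet in exactly one point, and a given direction
is parallel to at most one of `ℓ₁`, `ℓ₂`; so the common shadow meets `ℓ₁ ∪ ℓ₂`, and adjusting the
height puts a point of `E` on one of the lines. Hence `M^rd 1_E ≥ 1` on all `q² + q` directions.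
-/

section AffineLine

variable (K : Type*) {V : Type*} [Field K] [AddCommGroup V] [Module K V]

def affineLine (w v : V) : Set V :=
  Set.range fun s : K => w + s • v

theorem ncard_affineLine [Fintype K] (w : V) {v : V} (hv : v ≠ 0) :
    (affineLine K w v).ncard = Fintype.card K := by
  have hinj : Function.Injective fun s : K => w + s • v :=
    (add_right_injective w).comp (smul_left_injective K hv)
  rw [affineLine, ← Set.image_univ, Set.ncard_image_of_injective _ hinj, Set.ncard_univ,
    Nat.card_eq_fintype_card]

end AffineLine

section PlaneDet

variable {K : Type*} [Field K]

def planeDet (u v : K × K) : K :=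
  u.1 * v.2 - u.2 * v.1

theorem exists_add_smul_eq_add_smul {v₁ v₂ : K × K} (hdet : planeDet v₁ v₂ ≠ 0) (w₁ w₂ : K × K) :
    ∃ s t : K, w₁ + s • v₁ = w₂ + t • v₂ := by
  refine ⟨planeDet (w₂ - w₁) v₂ / planeDet v₁ v₂, planeDet (w₂ - w₁) v₁ / planeDet v₁ v₂, ?_⟩
  ext <;> simp only [Prod.fst_add, Prod.snd_add, Prod.smul_fst, Prod.smul_snd, smul_eq_mul] <;>
    field_simp <;> simp only [planeDet, Prod.fst_sub, Prod.snd_sub] <;> ring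

theorem affineLine_inter_subsingleton {v₁ v₂ : K × K} (hdet : planeDet v₁ v₂ ≠ 0) (w₁ w₂ : K × K) :
    (affineLine K w₁ v₁ ∩ affineLine K w₂ v₂).Subsingleton := by
  rintro _ ⟨⟨s, rfl⟩, t, ht⟩ _ ⟨⟨s', rfl⟩, t', ht'⟩
  have hs : (s - s') * planeDet v₁ v₂ = 0 := by
    simp only [planeDet, Prod.ext_iff, Prod.fst_add, Prod.snd_add, Prod.smul_fst, Prod.smul_snd,
      smul_eq_mul] at ht ht' ⊢
    linear_combination v₂.1 * (ht.2 - ht'.2) - v₂.2 * (ht.1 - ht'.1)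
  rw [sub_eq_zero.mp ((mul_eq_zero.mp hs).resolve_right hdet)]

theorem ncard_affineLine_union [Fintype K] {v₁ v₂ : K × K} (hdet : planeDet v₁ v₂ ≠ 0)
    (w₁ w₂ : K × K) :
    (affineLine K w₁ v₁ ∪ affineLine K w₂ v₂).ncard = 2 * Fintype.card K - 1 := by
  have hv₁ : v₁ ≠ 0 := by rintro rfl; simp [planeDet] at hdet
  have hv₂ : v₂ ≠ 0 := by rintro rfl; simp [planeDet] at hdet
  obtain ⟨s, t, hst⟩ := exists_add_smul_eq_add_smul hdet w₁ w₂
  have hinter : (affineLine K w₁ v₁ ∩ affineLine K w₂ v₂).ncard = 1 := by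
    rw [(affineLine_inter_subsingleton hdet w₁ w₂).eq_singleton_of_mem ⟨⟨s, rfl⟩, t, hst.symm⟩,
      Set.ncard_singleton]
  have h := Set.ncard_union_add_ncard_inter (affineLine K w₁ v₁) (affineLine K w₂ v₂)
  rw [hinter, ncard_affineLine K w₁ hv₁, ncard_affineLine K w₂ hv₂] at h
  omega

-- `planeDet v₁ v₂ • u = planeDet u v₂ • v₁ - planeDet u v₁ • v₂`
theorem planeDet_ne_zero_or_planeDet_ne_zero {u v₁ v₂ : K × K} (hu : u ≠ 0)
    (hdet : planeDet v₁ v₂ ≠ 0) : planeDet u v₁ ≠ 0 ∨ planeDet u v₂ ≠ 0 := by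
  by_contra! h
  simp only [planeDet] at h hdet
  refine hu (Prod.ext ?_ ?_)
  · exact (mul_eq_zero.mp (by linear_combination v₁.1 * h.2 - v₂.1 * h.1 :
      (v₁.1 * v₂.2 - v₁.2 * v₂.1) * u.1 = 0)).resolve_left hdet
  · exact (mul_eq_zero.mp (by linear_combination v₁.2 * h.2 - v₂.2 * h.1 :
      (v₁.1 * v₂.2 - v₁.2 * v₂.1) * u.2 = 0)).resolve_left hdet

end PlaneDet

section Shadow

variable {K : Type*} [Field K]

def shadowBase (ω : Option K × K) : K × K :=
  match ω.1 with
  | some _ => (0, -ω.2)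
  | none => (ω.2, 0)

def shadowDir (ω : Option K × K) : K × K :=
  match ω.1 with
  | some m => (1, m)
  | none => (0, 1)

theorem shadowDir_ne_zero (ω : Option K × K) : shadowDir ω ≠ 0 := by
  rcases ω with ⟨_ | m, γ⟩ <;> simp [shadowDir]

theorem lineRd_eq (ω : Option K × K) (τ s : K) :
    lineRd ω τ s = ((shadowBase ω + s • shadowDir ω).1, (shadowBase ω + s • shadowDir ω).2,
      τ + ω.2 * s) := by
  rcases ω with ⟨_ | m, γ⟩ <;>
    simp [lineRd, shadowBase, shadowDir, mul_comm, sub_eq_add_neg, add_comm]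

end Shadow

section TwoLines

variable {K : Type*} [Field K]

theorem twoLinesE_eq_image (w₁ v₁ w₂ v₂ : K × K) :
    twoLinesE w₁ v₁ w₂ v₂ =
      (fun p : K × K => (p.1, p.2, (0 : K))) '' (affineLine K w₁ v₁ ∪ affineLine K w₂ v₂) := by
  ext z
  constructor
  · rintro ⟨hz, hline⟩
    refine ⟨(z.1, z.2.1), hline.imp (fun ⟨s, hs⟩ => ⟨s, hs.symm⟩) (fun ⟨s, hs⟩ => ⟨s, hs.symm⟩), ?_⟩
    rw [← hz]
  · rintro ⟨p, hp, rfl⟩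
    exact ⟨rfl, hp.imp (fun ⟨s, hs⟩ => ⟨s, by rw [← hs]; rfl⟩)
      (fun ⟨s, hs⟩ => ⟨s, by rw [← hs]; rfl⟩)⟩

theorem ncard_twoLinesE [Fintype K] {w₁ v₁ w₂ v₂ : K × K} (hdet : planeDet v₁ v₂ ≠ 0) :
    (twoLinesE w₁ v₁ w₂ v₂).ncard = 2 * Fintype.card K - 1 := by
  have hinj : Function.Injective fun p : K × K => (p.1, p.2, (0 : K)) := by
    intro p p' h
    simp only [Prod.mk.injEq] at h
    exact Prod.ext h.1 h.2.1
  rw [twoLinesE_eq_image, Set.ncard_image_of_injective _ hinj, ncard_affineLine_union hdet]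

theorem exists_lineRd_mem_twoLinesE {w₁ v₁ w₂ v₂ : K × K} (hdet : planeDet v₁ v₂ ≠ 0)
    (ω : Option K × K) : ∃ τ s : K, lineRd ω τ s ∈ twoLinesE w₁ v₁ w₂ v₂ := by
  have hshadow :
      ∃ s : K, shadowBase ω + s • shadowDir ω ∈ affineLine K w₁ v₁ ∪ affineLine K w₂ v₂ := by
    rcases planeDet_ne_zero_or_planeDet_ne_zero (shadowDir_ne_zero ω) hdet with h | h
    · obtain ⟨s, t, hst⟩ := exists_add_smul_eq_add_smul h (shadowBase ω) w₁
      exact ⟨s, Or.inl ⟨t, hst.symm⟩⟩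
    · obtain ⟨s, t, hst⟩ := exists_add_smul_eq_add_smul h (shadowBase ω) w₂
      exact ⟨s, Or.inr ⟨t, hst.symm⟩⟩
  obtain ⟨s, hs⟩ := hshadow
  refine ⟨-(ω.2 * s), s, ?_⟩
  rw [lineRd_eq, neg_add_cancel, twoLinesE_eq_image]
  exact Set.mem_image_of_mem _ hs

end TwoLines

theorem one_le_Mrd_indicator {K : Type*} [Field K] [Fintype K] {S : Set (K × K × K)}
    {ω : Option K × K} {τ s : K} (h : lineRd ω τ s ∈ S) :
    1 ≤ Mrd (S.indicator fun _ => (1 : ℂ)) ω := by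
  calc (1 : ℝ) = ‖S.indicator (fun _ => (1 : ℂ)) (lineRd ω τ s)‖ := by
        rw [Set.indicator_of_mem h, norm_one]
    _ ≤ ∑ s' : K, ‖S.indicator (fun _ => (1 : ℂ)) (lineRd ω τ s')‖ :=
        Finset.single_le_sum (f := fun s' => ‖S.indicator (fun _ => (1 : ℂ)) (lineRd ω τ s')‖)
          (fun _ _ => norm_nonneg _) (Finset.mem_univ s)
    _ ≤ Mrd (S.indicator fun _ => (1 : ℂ)) ω :=
        Finset.le_sup' (fun τ' => ∑ s' : K, ‖S.indicator (fun _ => (1 : ℂ)) (lineRd ω τ' s')‖)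
          (Finset.mem_univ τ)

theorem card_rpow_le_lpNormR {X : Type*} [Fintype X] {r : ℝ} (hr : 0 ≤ r) {g : X → ℝ}
    (hg : ∀ x, 1 ≤ g x) : (Fintype.card X : ℝ) ^ (1 / r) ≤ lpNormR r g := by
  have hsum : (Fintype.card X : ℝ) ≤ ∑ x, |g x| ^ r := by
    simpa using Finset.card_nsmul_le_sum Finset.univ (fun x => |g x| ^ r) 1
      fun x _ => Real.one_le_rpow ((hg x).trans (le_abs_self _)) hr
  exact Real.rpow_le_rpow (Nat.cast_nonneg _) hsum (by positivity)

/-- If `ℓ₁, ℓ₂ ⊆ F_q²` are affine lines with distinct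
directions (non-parallel, i.e. nonvanishing determinant of direction vectors)
and `E` is the lift of `ℓ₁ ∪ ℓ₂` to `t = 0`, then `|E| = 2q - 1`,
`M^rd 1_E(ω) ≥ 1` for every refined direction `ω ∈ D₁`, and consequently
`‖M^rd 1_E‖_{ℓ^v(D₁)} ≥ (q² + q)^{1/v}` for every real `1 ≤ v < ∞`. -/
theorem stmt_16 {K : Type*} [Field K] [Fintype K] (w₁ v₁ w₂ v₂ : K × K)
    (hdet : v₁.1 * v₂.2 - v₁.2 * v₂.1 ≠ 0) :
    (twoLinesE w₁ v₁ w₂ v₂).ncard = 2 * Fintype.card K - 1 ∧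
    (∀ ω : Option K × K,
      (1 : ℝ) ≤ Mrd ((twoLinesE w₁ v₁ w₂ v₂).indicator fun _ => (1 : ℂ)) ω) ∧
    ∀ v : ℝ, 1 ≤ v →
      ((Fintype.card K : ℝ) ^ 2 + Fintype.card K) ^ (1 / v) ≤
        lpNormR v (Mrd ((twoLinesE w₁ v₁ w₂ v₂).indicator fun _ => (1 : ℂ))) := by
  have hMrd (ω : Option K × K) :
      (1 : ℝ) ≤ Mrd ((twoLinesE w₁ v₁ w₂ v₂).indicator fun _ => (1 : ℂ)) ω := by
    obtain ⟨τ, s, h⟩ := exists_lineRd_mem_twoLinesE hdet ω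
    exact one_le_Mrd_indicator h
  refine ⟨ncard_twoLinesE hdet, hMrd, fun v hv => ?_⟩
  have hcard : (Fintype.card (Option K × K) : ℝ) = (Fintype.card K : ℝ) ^ 2 + Fintype.card K := by
    rw [Fintype.card_prod, Fintype.card_option]
    push_cast
    ring
  exact hcard ▸ card_rpow_le_lpNormR (by linarith) hMrd
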